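/- Let p be a prime. Suppose G is a torsion-free abelian group that does not contain an isomorphic copy of ℚ, and let g ∈ G with g ≠ 0. The following are equivalent: (1) there is an injective additive group homomorphism h : ℤ_[p] →+ G with h(1) = g; (2) the following three conditions hold: (G) for every t ∈ ℤ_[p], there exists a unique y ∈ G with ψ_{p,t}(y, g); (H) for all t¹, t² ∈ ℤ_[p] there exist y₁, y₂, y₃ ∈ G with ψ_{p,t¹}(y₁, g), ψ_{p,t²}(y₂, g), ψ_{p,t¹-t²}(y₃, g), and y₃ = y₁ - y₂; (K) for every t ∈ ℤ_[p] with t ≠ 0, there exists y ∈ G with y ≠ 0 and ψ_{p,t}(y, g). -/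

import Mathlib

/-- A group `G` is torsion-free: `n • x ≠ 0` for every `x ≠ 0` and integer `n > 0`. -/
def IsTorsionFreeGroup (G : Type*) [AddCommGroup G] : Prop :=
  ∀ x : G, x ≠ 0 → ∀ n : ℤ, 0 < n → n • x ≠ 0

/-- `G` contains a subgroup isomorphic to `A`. -/
def ContainsCopy (A G : Type*) [AddCommGroup A] [AddCommGroup G] : Prop :=
  ∃ f : A →+ G, Function.Injective f

/-- The formula `ψ_{p,t}(y, x)`: for every `n`, `p^n` divides `y - (t.appr n) • x` in `G`,
and every integer `q` coprime to `p` divides both `y` and `x` in `G`. -/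
def PsiFormula {G : Type*} [AddCommGroup G] (p : ℕ) [Fact p.Prime]
    (t : ℤ_[p]) (y x : G) : Prop :=
  (∀ n : ℕ, ∃ z : G, ((p : ℤ) ^ n) • z = y - (t.appr n : ℤ) • x) ∧
  (∀ q : ℤ, Int.gcd q (p : ℤ) = 1 →
    (∃ z : G, q • z = y) ∧ (∃ z : G, q • z = x))

/-!
A homomorphism `h : ℤ_[p] →+ G` with `h 1 = g` satisfies `ψ_{p,t}(h t, g)`, because
`t - t.appr n` is a multiple of `p ^ n` and the integers prime to `p` are units of `ℤ_[p]`.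
Two solutions of `ψ_{p,t}(·, g)` differ by an element divisible by every integer, and a nonzero such
element would span a copy of `ℚ`; this gives (G), and (H), (K) follow from additivity and
injectivity. Conversely, (G) defines `t ↦ y_t`, (H) makes it additive, (K) makes it injective, and
`y_1 = g` because `g` itself satisfies `ψ_{p,1}(g, g)`.
-/

section

variable {G : Type*} [AddCommGroup G]

theorem IsTorsionFreeGroup.isAddTorsionFree (hG : IsTorsionFreeGroup G) : IsAddTorsionFree G where
  nsmul_right_injective {n} hn x y hxy := by
    by_contra hne
    refine hG (x - y) (sub_ne_zero.mpr hne) n (by omega) ?_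
    simpa [natCast_zsmul, smul_sub, sub_eq_zero] using hxy

/-- The embedding is `a ↦ a • d`, which makes sense because `d` is divisible by every denominator
and the quotients are unique in a torsion-free group. -/
theorem IsTorsionFreeGroup.containsCopy_rat_of_forall_dvd (hG : IsTorsionFreeGroup G) {d : G}
    (hd : d ≠ 0) (hdiv : ∀ n : ℕ, n ≠ 0 → ∃ z : G, (n : ℤ) • z = d) : ContainsCopy ℚ G := by
  have := hG.isAddTorsionFree
  have hex (a : ℚ) : ∃ y : G, (a.den : ℤ) • y = a.num • d := by
    obtain ⟨z, hz⟩ := hdiv a.den a.den_nz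
    exact ⟨a.num • z, by rw [smul_comm, hz]⟩
  choose f hf using hex
  have hf_smul {a : ℚ} {n m : ℤ} (hn : n ≠ 0) (ham : a * n = m) : n • f a = m • d := by
    have hnum : n * a.num = a.den * m := by
      have : (n * a.num : ℚ) = a.den * m := by rw [← Rat.mul_den_eq_num, ← ham]; ring
      exact_mod_cast this
    apply zsmul_right_injective (n := (a.den : ℤ)) (by exact_mod_cast a.den_nz)
    simp only [smul_comm (a.den : ℤ) n, hf, smul_smul, hnum]
  have hf_add (a b : ℚ) : f (a + b) = f a + f b := by
    have hN : ((a.den * b.den : ℕ) : ℤ) ≠ 0 := by positivity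
    apply zsmul_right_injective hN
    dsimp only
    rw [smul_add, hf_smul hN (m := a.num * b.den + b.num * a.den), add_smul,
      hf_smul hN (m := a.num * b.den), hf_smul hN (m := b.num * a.den)]
    all_goals
      push_cast
      simp only [← Rat.mul_den_eq_num]
      ring
  refine ⟨AddMonoidHom.mk' f hf_add, (injective_iff_map_eq_zero _).mpr fun a ha => ?_⟩
  have hnum : a.num • d = 0 := by rw [← hf, ← AddMonoidHom.mk'_apply f hf_add, ha, smul_zero]
  exact Rat.num_eq_zero.mp ((smul_eq_zero.mp hnum).resolve_right hd)

theorem exists_mul_zsmul_eq_of_isCoprime {a b : ℤ} (hab : IsCoprime a b) {x : G}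
    (ha : ∃ z : G, a • z = x) (hb : ∃ w : G, b • w = x) : ∃ u : G, (a * b) • u = x := by
  obtain ⟨z, rfl⟩ := ha
  obtain ⟨w, hw⟩ := hb
  obtain ⟨s, r, hsr⟩ := hab
  refine ⟨r • z + s • w, ?_⟩
  calc (a * b) • (r • z + s • w) = (r * b) • (a • z) + (s * a) • (b • w) := by
        simp only [smul_add, smul_smul]; ring_nf
    _ = a • z := by rw [hw, ← add_smul, add_comm, hsr, one_smul]

theorem exists_natCast_zsmul_eq_of_forall_pow_of_forall_coprime {p : ℕ} (hp : p.Prime) {x : G}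
    (hpow : ∀ k : ℕ, ∃ z : G, ((p : ℤ) ^ k) • z = x)
    (hcop : ∀ q : ℤ, Int.gcd q p = 1 → ∃ z : G, q • z = x) {n : ℕ} (hn : n ≠ 0) :
    ∃ z : G, (n : ℤ) • z = x := by
  have hpq : Nat.Coprime (p ^ n.factorization p) (n / p ^ n.factorization p) :=
    (Nat.coprime_ordCompl hp hn).pow_left _
  have hq : Int.gcd ((n / p ^ n.factorization p : ℕ) : ℤ) p = 1 :=
    Int.gcd_natCast_natCast _ _ ▸ (Nat.coprime_ordCompl hp hn).symm
  have := exists_mul_zsmul_eq_of_isCoprime (Int.isCoprime_iff_gcd_eq_one.mpr ?_)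
    (hpow (n.factorization p)) (hcop _ hq)
  · rwa [← Nat.ordProj_mul_ordCompl_eq_self n p, Nat.cast_mul, Nat.cast_pow]
  · exact_mod_cast hpq

theorem PadicInt.exists_zsmul_eq_of_gcd_eq_one {p : ℕ} [Fact p.Prime] {q : ℤ}
    (hq : Int.gcd q p = 1) (s : ℤ_[p]) : ∃ z : ℤ_[p], q • z = s := by
  have hu : IsUnit (q : ℤ_[p]) := PadicInt.isUnit_iff.mpr
    (PadicInt.norm_intCast_eq_one_iff.mpr (Int.isCoprime_iff_gcd_eq_one.mpr hq))
  exact ⟨hu.unit⁻¹ * s, by rw [zsmul_eq_mul, ← mul_assoc, hu.mul_val_inv, one_mul]⟩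

variable {p : ℕ} [Fact p.Prime]

theorem psiFormula_map (f : ℤ_[p] →+ G) (t : ℤ_[p]) : PsiFormula p t (f t) (f 1) := by
  refine ⟨fun n => ?_, fun q hq => ⟨?_, ?_⟩⟩
  · obtain ⟨c, hc⟩ := Ideal.mem_span_singleton.mp (PadicInt.appr_spec n t)
    refine ⟨f c, ?_⟩
    rw [← map_zsmul, ← map_zsmul, ← map_sub, zsmul_eq_mul, zsmul_eq_mul, mul_one]
    push_cast
    rw [hc]
  all_goals
    obtain ⟨z, hz⟩ := PadicInt.exists_zsmul_eq_of_gcd_eq_one hq _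
    exact ⟨f z, by rw [← map_zsmul, hz]⟩

namespace PsiFormula

variable {t : ℤ_[p]} {x y y' : G}

theorem eq (hG : IsTorsionFreeGroup G) (hQ : ¬ ContainsCopy ℚ G) (h : PsiFormula p t y x)
    (h' : PsiFormula p t y' x) : y = y' := by
  by_contra hne
  refine hQ (hG.containsCopy_rat_of_forall_dvd (sub_ne_zero.mpr hne) fun n hn =>
    exists_natCast_zsmul_eq_of_forall_pow_of_forall_coprime (Fact.out : p.Prime)
      (fun k => ?_) (fun q hq => ?_) hn)
  · obtain ⟨z, hz⟩ := h.1 k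
    obtain ⟨z', hz'⟩ := h'.1 k
    exact ⟨z - z', by rw [smul_sub, hz, hz', sub_sub_sub_cancel_right]⟩
  · obtain ⟨z, hz⟩ := (h.2 q hq).1
    obtain ⟨z', hz'⟩ := (h'.2 q hq).1
    exact ⟨z - z', by rw [smul_sub, hz, hz']⟩

theorem one_self (hx : ∀ q : ℤ, Int.gcd q p = 1 → ∃ z : G, q • z = x) : PsiFormula p 1 x x := by
  refine ⟨fun n => ?_, fun q hq => ⟨hx q hq, hx q hq⟩⟩
  obtain ⟨c, hc⟩ : (p : ℤ) ^ n ∣ 1 - ((1 : ℤ_[p]).appr n : ℤ) := by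
    rw [← PadicInt.pow_p_dvd_int_iff]
    push_cast
    exact Ideal.mem_span_singleton.mp (PadicInt.appr_spec n 1)
  exact ⟨c • x, by rw [smul_smul, ← hc, sub_smul, one_smul]⟩

end PsiFormula

end

theorem padic_embeds_iff_general (p : ℕ) [Fact p.Prime] (G : Type*) [AddCommGroup G]
    (hG : IsTorsionFreeGroup G) (hQ : ¬ ContainsCopy ℚ G)
    (g : G) :
    (∃ h : ℤ_[p] →+ G, Function.Injective h ∧ h 1 = g) ↔
    ((∀ t : ℤ_[p], ∃! y : G, PsiFormula p t y g) ∧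
     (∀ t₁ t₂ : ℤ_[p], ∃ y₁ y₂ y₃ : G,
        PsiFormula p t₁ y₁ g ∧ PsiFormula p t₂ y₂ g ∧
        PsiFormula p (t₁ - t₂) y₃ g ∧ y₃ = y₁ - y₂) ∧
     (∀ t : ℤ_[p], t ≠ 0 → ∃ y : G, y ≠ 0 ∧ PsiFormula p t y g)) := by
  constructor
  · rintro ⟨h, hinj, rfl⟩
    refine ⟨fun t => ⟨h t, psiFormula_map h t, fun y hy => hy.eq hG hQ (psiFormula_map h t)⟩,
      fun t₁ t₂ => ⟨h t₁, h t₂, h (t₁ - t₂), psiFormula_map h t₁, psiFormula_map h t₂,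
        psiFormula_map h (t₁ - t₂), map_sub h t₁ t₂⟩,
      fun t ht => ⟨h t, (map_ne_zero_iff h hinj).mpr ht, psiFormula_map h t⟩⟩
  · rintro ⟨hexists, hsub, hnonzero⟩
    choose y hy hy_unique using hexists
    have hy_sub (t₁ t₂ : ℤ_[p]) : y (t₁ - t₂) = y t₁ - y t₂ := by
      obtain ⟨y₁, y₂, y₃, h₁, h₂, h₃, rfl⟩ := hsub t₁ t₂
      rw [← hy_unique _ _ h₁, ← hy_unique _ _ h₂, ← hy_unique _ _ h₃]
    refine ⟨AddMonoidHom.ofMapSub y hy_sub, (injective_iff_map_eq_zero _).mpr fun t ht => ?_,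
      (hy_unique 1 g (PsiFormula.one_self fun q hq => ((hy 1).2 q hq).2)).symm⟩
    by_contra ht0
    obtain ⟨y', hy'0, hy'⟩ := hnonzero t ht0
    exact hy'0 (hy_unique t y' hy' ▸ ht)

/-- In a torsion-free group with no copy of `ℚ`, `ℤ_[p]` embeds sending `1` to `g ≠ 0`
iff conditions (G), (H), (K) hold for `g`. -/
theorem padic_embeds_iff (p : ℕ) [Fact p.Prime] (G : Type*) [AddCommGroup G]
    (hG : IsTorsionFreeGroup G) (hQ : ¬ ContainsCopy ℚ G)
    (g : G) (hg : g ≠ 0) :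
    (∃ h : ℤ_[p] →+ G, Function.Injective h ∧ h 1 = g) ↔
    ((∀ t : ℤ_[p], ∃! y : G, PsiFormula p t y g) ∧
     (∀ t₁ t₂ : ℤ_[p], ∃ y₁ y₂ y₃ : G,
        PsiFormula p t₁ y₁ g ∧ PsiFormula p t₂ y₂ g ∧
        PsiFormula p (t₁ - t₂) y₃ g ∧ y₃ = y₁ - y₂) ∧
     (∀ t : ℤ_[p], t ≠ 0 → ∃ y : G, y ≠ 0 ∧ PsiFormula p t y g)) :=
  padic_embeds_iff_general p G hG hQ g
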